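/- For every p ∈ (1,∞), setting p* = p/(p−1), and for every x ≥ 0, one has ∫₀^x (1+t^p)^{−2/p} dt = ∫₀^{x/(1+x^p)^{1/p}} (1−t^p)^{−1/p*} dt; that is, the inverse of the generalized tangent τ_{p*,p}(u) := sin_{p*,p}(u)/(cos_{p*,p}(u))^{p*−1} on [0, π_{p*,p}/2) is given by τ_{p*,p}^{−1}(x) = ∫₀^x (1+t^p)^{−2/p} dt. -/

import Mathlib

/-!
On `[0, π_{p*,p}/2)` one has `cos_{p*,p} = (1 - sin_{p*,p}^p)^{1/p*}`, so with `s = sin_{p*,p} u`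
the generalized tangent is `τ(u) = s / (1 - s^p)^{1/p}`, whose inverse map is
`x ↦ x / (1 + x^p)^{1/p}`. The substitution `s = t (1 + t^p)^{-1/p}`, for which
`ds = (1 + t^p)^{-1-1/p} dt` and `1 - s^p = (1 + t^p)^{-1}`, turns `∫₀^x (1+t^p)^{-2/p} dt` into
`sin_{p*,p}^{-1}(x / (1 + x^p)^{1/p})`; evaluated at `x = τ(u)` this is `sin_{p*,p}^{-1}(s) = u`.
-/

open Real Set MeasureTheory Filter

/-- `sin_{p,q}^{-1}(x) = ∫₀ˣ (1-t^q)^{-1/p} dt`. -/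
noncomputable def arcsinpq (p q x : ℝ) : ℝ := ∫ t in (0:ℝ)..x, (1 - t ^ q) ^ (-(1 / p))

/-- The generalized π: `π_{p,q} = 2 sin_{p,q}^{-1}(1)`. -/
noncomputable def pipq (p q : ℝ) : ℝ := 2 * arcsinpq p q 1

/-- `sin_{p,q}` on `[0, π_{p,q}/2]`, as the inverse of `arcsinpq p q : [0,1] → [0, π_{p,q}/2]`. -/
noncomputable def sinHalf (p q : ℝ) : ℝ → ℝ := Function.invFunOn (arcsinpq p q) (Set.Icc 0 1)

/-- `sin_{p,q}` on all of `ℝ`: extended to `[π_{p,q}/2, π_{p,q}]` by `sin_{p,q}(π_{p,q}-x)` and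
then to `ℝ` as the odd `2π_{p,q}`-periodic continuation. -/
noncomputable def sinpq (p q x : ℝ) : ℝ :=
  let T := pipq p q
  let y := x - 2 * T * (⌊(x + T) / (2 * T)⌋ : ℝ)
  if y < 0 then -(sinHalf p q (if -y ≤ T / 2 then -y else T + y))
  else sinHalf p q (if y ≤ T / 2 then y else T - y)

/-- `cos_{p,q} = (sin_{p,q})'`. -/
noncomputable def cospq (p q : ℝ) : ℝ → ℝ := deriv (sinpq p q)

/-- Rising factorial (Pochhammer symbol) `(a)_n = a(a+1)⋯(a+n-1)`. -/
noncomputable def poch (a : ℝ) (n : ℕ) : ℝ := ∏ i ∈ Finset.range n, (a + i)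

open intervalIntegral Topology

section Substitution

variable {p t : ℝ}

lemma one_sub_mul_one_add_rpow_rpow_neg_rpow (hp : p ≠ 0) (ht : 0 ≤ t) :
    1 - (t * (1 + t ^ p) ^ (-(1 / p))) ^ p = (1 + t ^ p)⁻¹ := by
  have hB : 0 < 1 + t ^ p := by positivity
  rw [mul_rpow ht (rpow_nonneg hB.le _), ← rpow_mul hB.le, neg_mul, one_div_mul_cancel hp,
    rpow_neg_one]
  field_simp
  ring

lemma hasDerivAt_mul_one_add_rpow_rpow_neg (hp : 1 ≤ p) (ht : 0 ≤ t) :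
    HasDerivAt (fun t : ℝ => t * (1 + t ^ p) ^ (-(1 / p))) ((1 + t ^ p) ^ (-(1 + 1 / p))) t := by
  have hp0 : p ≠ 0 := by positivity
  have hB : 0 < 1 + t ^ p := by positivity
  have hpow : t * t ^ (p - 1) = t ^ p := by
    rcases ht.eq_or_lt with rfl | ht
    · rw [zero_mul, zero_rpow hp0]
    · rw [rpow_sub_one ht.ne', mul_div_cancel₀ _ ht.ne']
  refine ((hasDerivAt_id t).mul (((hasDerivAt_rpow_const (Or.inr hp)).const_add 1).rpow_const
    (p := -(1 / p)) (Or.inl hB.ne'))).congr_deriv ?_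
  have hsplit : (1 + t ^ p) ^ (-(1 / p)) = (1 + t ^ p) ^ (-(1 + 1 / p)) * (1 + t ^ p) := by
    rw [← rpow_add_one hB.ne']
    ring_nf
  rw [hsplit, id, one_mul, show -(1 / p) - 1 = -(1 + 1 / p) by ring]
  field_simp
  linear_combination -hpow

theorem integral_one_add_rpow_rpow_neg_two_div (hp : 1 ≤ p) {x : ℝ} (hx : 0 ≤ x) :
    ∫ t in (0:ℝ)..x, (1 + t ^ p) ^ (-(2 / p))
      = ∫ s in (0:ℝ)..(x / (1 + x ^ p) ^ (1 / p)), (1 - s ^ p) ^ (-(1 - 1 / p)) := by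
  have hp0 : p ≠ 0 := by positivity
  set φ : ℝ → ℝ := fun t => t * (1 + t ^ p) ^ (-(1 / p))
  set g : ℝ → ℝ := fun s => (1 - s ^ p) ^ (-(1 - 1 / p))
  have hnonneg : ∀ t ∈ uIcc 0 x, 0 ≤ t := fun t ht => (uIcc_of_le hx ▸ ht).1
  have hB : ∀ t ∈ uIcc 0 x, 0 < 1 + t ^ p := fun t ht => by have := hnonneg t ht; positivity
  have hφ' : ContinuousOn (fun t : ℝ => (1 + t ^ p) ^ (-(1 + 1 / p))) (uIcc 0 x) := fun t ht =>
    ((continuousAt_const.add (continuousAt_rpow_const t p (Or.inr (by linarith)))).rpow_const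
      (Or.inl (hB t ht).ne')).continuousWithinAt
  have hg : ContinuousOn g (φ '' uIcc 0 x) := by
    rintro _ ⟨t, ht, rfl⟩
    refine ((continuousAt_const.sub (continuousAt_rpow_const _ p (Or.inr (by linarith)))).rpow_const
      (Or.inl ?_)).continuousWithinAt
    change 1 - φ t ^ p ≠ 0
    rw [one_sub_mul_one_add_rpow_rpow_neg_rpow hp0 (hnonneg t ht)]
    exact inv_ne_zero (hB t ht).ne'
  calc ∫ t in (0:ℝ)..x, (1 + t ^ p) ^ (-(2 / p))
      = ∫ t in (0:ℝ)..x, (g ∘ φ) t * (1 + t ^ p) ^ (-(1 + 1 / p)) := by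
        refine integral_congr fun t ht => ?_
        simp only [Function.comp, g, φ, one_sub_mul_one_add_rpow_rpow_neg_rpow hp0 (hnonneg t ht),
          ← rpow_neg_one, ← rpow_mul (hB t ht).le, ← rpow_add (hB t ht)]
        ring_nf
    _ = ∫ s in φ 0..φ x, g s := integral_comp_mul_deriv'
        (fun t ht => hasDerivAt_mul_one_add_rpow_rpow_neg hp (hnonneg t ht)) hφ' hg
    _ = _ := by simp [φ, g, rpow_neg (by positivity : (0:ℝ) ≤ 1 + x ^ p), div_eq_mul_inv]

end Substitution

lemma one_sub_rpow_pos {q s : ℝ} (hq : 0 < q) (hs0 : 0 ≤ s) (hs1 : s < 1) : 0 < 1 - s ^ q :=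
  sub_pos.2 (rpow_lt_one hs0 hs1 hq)

lemma continuousAt_one_sub_rpow_rpow {q c s : ℝ} (hq : 0 < q) (hs0 : 0 ≤ s) (hs1 : s < 1) :
    ContinuousAt (fun t : ℝ => (1 - t ^ q) ^ c) s :=
  (continuousAt_const.sub (continuousAt_rpow_const s q (Or.inr hq.le))).rpow_const
    (Or.inl (one_sub_rpow_pos hq hs0 hs1).ne')

/-- Near `t = 1` the integrand is dominated by `(1 - t)^{-c}`, as `t^q ≤ t` on `[0, 1]`. -/
lemma intervalIntegrable_one_sub_rpow_rpow_neg {q c : ℝ} (hq : 1 ≤ q) (hc0 : 0 ≤ c)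
    (hc1 : c < 1) : IntervalIntegrable (fun t : ℝ => (1 - t ^ q) ^ (-c)) volume 0 1 := by
  have hdom : IntervalIntegrable (fun t : ℝ => (1 - t) ^ (-c)) volume 0 1 := by
    simpa using ((intervalIntegrable_rpow' (a := 0) (b := 1) (r := -c) (by linarith)).comp_sub_left
      1).symm
  refine hdom.mono_fun (Measurable.aestronglyMeasurable (by fun_prop)) ?_
  rw [EventuallyLE, ae_restrict_iff' measurableSet_uIoc]
  filter_upwards with t ht
  rw [uIoc_of_le zero_le_one] at ht
  obtain ⟨ht0, ht1⟩ := ht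
  have hle : t ^ q ≤ t := by
    simpa using rpow_le_rpow_of_exponent_ge ht0 ht1 hq
  rw [norm_of_nonneg (rpow_nonneg (by linarith [rpow_nonneg ht0.le q]) _),
    norm_of_nonneg (rpow_nonneg (by linarith) _)]
  rcases ht1.lt_or_eq with ht1 | rfl
  · exact rpow_le_rpow_of_nonpos (by linarith) (by linarith) (by linarith)
  · simp

section GeneralizedSine

variable {p q u : ℝ}

lemma arcsinpq_zero (p q : ℝ) : arcsinpq p q 0 = 0 := integral_same

lemma intervalIntegrable_arcsinpq (hp : 1 < p) (hq : 1 ≤ q) :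
    IntervalIntegrable (fun t : ℝ => (1 - t ^ q) ^ (-(1 / p))) volume 0 1 :=
  intervalIntegrable_one_sub_rpow_rpow_neg hq (by positivity) ((div_lt_one (by linarith)).2 hp)

lemma continuousOn_arcsinpq (hp : 1 < p) (hq : 1 ≤ q) : ContinuousOn (arcsinpq p q) (Icc 0 1) := by
  have := continuousOn_primitive_interval' (intervalIntegrable_arcsinpq hp hq) left_mem_uIcc
  rwa [uIcc_of_le zero_le_one] at this

lemma hasDerivAt_arcsinpq (hp : 1 < p) (hq : 1 ≤ q) {s : ℝ} (hs0 : 0 ≤ s) (hs1 : s < 1) :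
    HasDerivAt (arcsinpq p q) ((1 - s ^ q) ^ (-(1 / p))) s :=
  integral_hasDerivAt_right
    ((intervalIntegrable_arcsinpq hp hq).mono_set (by
      rw [uIcc_of_le hs0, uIcc_of_le zero_le_one]; exact Icc_subset_Icc le_rfl hs1.le))
    (Measurable.stronglyMeasurable (by fun_prop)).stronglyMeasurableAtFilter
    (continuousAt_one_sub_rpow_rpow (by linarith) hs0 hs1)

lemma strictMonoOn_arcsinpq (hp : 1 < p) (hq : 1 ≤ q) : StrictMonoOn (arcsinpq p q) (Icc 0 1) :=
  strictMonoOn_of_deriv_pos (convex_Icc 0 1) (continuousOn_arcsinpq hp hq) fun s hs => by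
    rw [interior_Icc] at hs
    rw [(hasDerivAt_arcsinpq hp hq hs.1.le hs.2).deriv]
    exact rpow_pos_of_pos (one_sub_rpow_pos (by linarith) hs.1.le hs.2) _

lemma arcsinpq_one (p q : ℝ) : arcsinpq p q 1 = pipq p q / 2 := by
  rw [pipq]
  ring

lemma bijOn_arcsinpq (hp : 1 < p) (hq : 1 ≤ q) :
    BijOn (arcsinpq p q) (Icc 0 1) (Icc 0 (pipq p q / 2)) := by
  have hmono := (strictMonoOn_arcsinpq hp hq).monotoneOn
  have hsurj := intermediate_value_Icc zero_le_one (continuousOn_arcsinpq hp hq)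
  rw [arcsinpq_zero, arcsinpq_one] at hsurj
  refine ⟨fun s hs => ⟨?_, ?_⟩, (strictMonoOn_arcsinpq hp hq).injOn, hsurj⟩
  · simpa [arcsinpq_zero] using hmono (left_mem_Icc.2 zero_le_one) hs hs.1
  · simpa [arcsinpq_one] using hmono hs (right_mem_Icc.2 zero_le_one) hs.2

lemma invOn_sinHalf (hp : 1 < p) (hq : 1 ≤ q) :
    InvOn (sinHalf p q) (arcsinpq p q) (Icc 0 1) (Icc 0 (pipq p q / 2)) :=
  (bijOn_arcsinpq hp hq).invOn_invFunOn

lemma bijOn_sinHalf (hp : 1 < p) (hq : 1 ≤ q) :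
    BijOn (sinHalf p q) (Icc 0 (pipq p q / 2)) (Icc 0 1) :=
  (bijOn_arcsinpq hp hq).symm (invOn_sinHalf hp hq).symm

lemma strictMonoOn_sinHalf (hp : 1 < p) (hq : 1 ≤ q) :
    StrictMonoOn (sinHalf p q) (Icc 0 (pipq p q / 2)) := by
  have hmaps := (bijOn_sinHalf hp hq).mapsTo
  refine MonotoneOn.strictMonoOn_of_injOn (fun a ha b hb hab => ?_) (bijOn_sinHalf hp hq).injOn
  rwa [← (strictMonoOn_arcsinpq hp hq).le_iff_le (hmaps ha) (hmaps hb),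
    (invOn_sinHalf hp hq).2 ha, (invOn_sinHalf hp hq).2 hb]

lemma sinHalf_zero (hp : 1 < p) (hq : 1 ≤ q) : sinHalf p q 0 = 0 := by
  simpa [arcsinpq_zero] using (invOn_sinHalf hp hq).1 (left_mem_Icc.2 zero_le_one)

lemma sinHalf_pipq_div_two (hp : 1 < p) (hq : 1 ≤ q) : sinHalf p q (pipq p q / 2) = 1 := by
  simpa [arcsinpq_one] using (invOn_sinHalf hp hq).1 (right_mem_Icc.2 zero_le_one)

lemma pipq_pos (hp : 1 < p) (hq : 1 ≤ q) : 0 < pipq p q := by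
  have := strictMonoOn_arcsinpq hp hq (left_mem_Icc.2 zero_le_one) (right_mem_Icc.2 zero_le_one)
    zero_lt_one
  rw [arcsinpq_zero, arcsinpq_one] at this
  linarith

lemma sinHalf_mem_Ioo (hp : 1 < p) (hq : 1 ≤ q) (hu : u ∈ Ioo 0 (pipq p q / 2)) :
    sinHalf p q u ∈ Ioo 0 1 := by
  have hπ := pipq_pos hp hq
  have hmono := strictMonoOn_sinHalf hp hq
  rw [← sinHalf_zero hp hq, ← sinHalf_pipq_div_two hp hq]
  exact ⟨hmono ⟨le_rfl, by linarith⟩ (Ioo_subset_Icc_self hu) hu.1,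
    hmono (Ioo_subset_Icc_self hu) ⟨by linarith, le_rfl⟩ hu.2⟩

lemma continuousAt_sinHalf (hp : 1 < p) (hq : 1 ≤ q) (hu : u ∈ Ioo 0 (pipq p q / 2)) :
    ContinuousAt (sinHalf p q) u := by
  refine continuousAt_of_monotoneOn_of_image_mem_nhds (strictMonoOn_sinHalf hp hq).monotoneOn
    (Icc_mem_nhds hu.1 hu.2) ?_
  rw [(bijOn_sinHalf hp hq).image_eq]
  exact Icc_mem_nhds (sinHalf_mem_Ioo hp hq hu).1 (sinHalf_mem_Ioo hp hq hu).2

lemma hasDerivAt_sinHalf (hp : 1 < p) (hq : 1 ≤ q) (hu : u ∈ Ioo 0 (pipq p q / 2)) :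
    HasDerivAt (sinHalf p q) ((1 - sinHalf p q u ^ q) ^ (1 / p)) u := by
  obtain ⟨hs0, hs1⟩ := sinHalf_mem_Ioo hp hq hu
  have hpos := one_sub_rpow_pos (q := q) (by linarith) hs0.le hs1
  have := (hasDerivAt_arcsinpq hp hq hs0.le hs1).of_local_left_inverse
    (continuousAt_sinHalf hp hq hu) (rpow_pos_of_pos hpos _).ne' <| by
      filter_upwards [Icc_mem_nhds hu.1 hu.2] with y hy using (invOn_sinHalf hp hq).2 hy
  rwa [← rpow_neg hpos.le, neg_neg] at this

lemma sinpq_eq_sinHalf (hp : 1 < p) (hq : 1 ≤ q) (hu : u ∈ Icc 0 (pipq p q / 2)) :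
    sinpq p q u = sinHalf p q u := by
  have hπ := pipq_pos hp hq
  have hfloor : ⌊(u + pipq p q) / (2 * pipq p q)⌋ = 0 := by
    rw [Int.floor_eq_zero_iff]
    exact ⟨by have := hu.1; positivity, by rw [div_lt_one (by positivity)]; linarith [hu.2]⟩
  simp only [sinpq, hfloor, Int.cast_zero, mul_zero, sub_zero, if_neg (not_lt.2 hu.1),
    if_pos hu.2]

lemma arcsinpq_sinpq (hp : 1 < p) (hq : 1 ≤ q) (hu : u ∈ Icc 0 (pipq p q / 2)) :
    arcsinpq p q (sinpq p q u) = u := by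
  rw [sinpq_eq_sinHalf hp hq hu]
  exact (invOn_sinHalf hp hq).2 hu

lemma sinpq_mem_Ico (hp : 1 < p) (hq : 1 ≤ q) (hu : u ∈ Ico 0 (pipq p q / 2)) :
    sinpq p q u ∈ Ico 0 1 := by
  rw [sinpq_eq_sinHalf hp hq (Ico_subset_Icc_self hu)]
  rcases hu.1.eq_or_lt with rfl | hu0
  · simp [sinHalf_zero hp hq]
  · exact Ioo_subset_Ico_self (sinHalf_mem_Ioo hp hq ⟨hu0, hu.2⟩)

lemma cospq_eq (hp : 1 < p) (hq : 1 ≤ q) (hu : u ∈ Ioo 0 (pipq p q / 2)) :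
    cospq p q u = (1 - sinpq p q u ^ q) ^ (1 / p) := by
  have hev : sinpq p q =ᶠ[𝓝 u] sinHalf p q := by
    filter_upwards [Icc_mem_nhds hu.1 hu.2] with y hy using sinpq_eq_sinHalf hp hq hy
  rw [cospq, hev.deriv_eq, (hasDerivAt_sinHalf hp hq hu).deriv,
    sinpq_eq_sinHalf hp hq (Ioo_subset_Icc_self hu)]

lemma sinpq_div_cospq_rpow (hp : 1 < p) (hq : 1 ≤ q) (hu : u ∈ Ico 0 (pipq p q / 2)) :
    sinpq p q u / cospq p q u ^ (p - 1) = sinpq p q u / (1 - sinpq p q u ^ q) ^ (1 - 1 / p) := by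
  rcases hu.1.eq_or_lt with rfl | hu0
  · rw [sinpq_eq_sinHalf hp hq (Ico_subset_Icc_self hu), sinHalf_zero hp hq, zero_div, zero_div]
  obtain ⟨hs0, hs1⟩ := sinpq_mem_Ico hp hq hu
  rw [cospq_eq hp hq ⟨hu0, hu.2⟩, ← rpow_mul (one_sub_rpow_pos (by linarith) hs0 hs1).le]
  congr 2
  field_simp

end GeneralizedSine

lemma div_one_add_rpow_rpow_of_div_one_sub_rpow_rpow {p s : ℝ} (hp : 0 < p) (hs0 : 0 ≤ s)
    (hs1 : s < 1) :
    s / (1 - s ^ p) ^ (1 / p) / (1 + (s / (1 - s ^ p) ^ (1 / p)) ^ p) ^ (1 / p) = s := by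
  have hpos := one_sub_rpow_pos hp hs0 hs1
  have hpow : (s / (1 - s ^ p) ^ (1 / p)) ^ p = s ^ p / (1 - s ^ p) := by
    rw [div_rpow hs0 (rpow_nonneg hpos.le _), ← rpow_mul hpos.le, one_div_mul_cancel hp.ne',
      rpow_one]
  have hsum : 1 + s ^ p / (1 - s ^ p) = (1 - s ^ p)⁻¹ := by
    field_simp
    ring
  rw [hpow, hsum, inv_rpow hpos.le, div_div, mul_inv_cancel₀ (rpow_pos_of_pos hpos _).ne', div_one]

/-- For `x ≥ 0`, `∫₀^x (1+t^p)^{-2/p} dt = ∫₀^{x/(1+x^p)^{1/p}} (1-t^p)^{-1/p*} dt`;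
moreover the generalized tangent `τ_{p*,p}(u) = sin_{p*,p}(u)/cos_{p*,p}(u)^{p*-1}` on
`[0, π_{p*,p}/2)` has inverse `τ_{p*,p}^{-1}(x) = ∫₀^x (1+t^p)^{-2/p} dt`. -/
theorem generalized_tangent_integral (p : ℝ) (hp : 1 < p) :
    (∀ x : ℝ, 0 ≤ x →
      (∫ t in (0:ℝ)..x, (1 + t ^ p) ^ (-(2/p)))
        = ∫ t in (0:ℝ)..(x / (1 + x ^ p) ^ (1/p)), (1 - t ^ p) ^ (-(1/(p/(p-1))))) ∧
    ∀ u ∈ Set.Ico (0:ℝ) (pipq (p/(p-1)) p / 2),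
      (∫ t in (0:ℝ)..(sinpq (p/(p-1)) p u / cospq (p/(p-1)) p u ^ (p/(p-1) - 1)),
        (1 + t ^ p) ^ (-(2/p))) = u := by
  have hp' : 1 < p / (p - 1) := by rw [one_lt_div (by linarith)]; linarith
  have hconj : 1 / (p / (p - 1)) = 1 - 1 / p := by field_simp
  have hconj' : 1 - 1 / (p / (p - 1)) = 1 / p := by rw [hconj]; ring
  have hsubst : ∀ x : ℝ, 0 ≤ x → (∫ t in (0:ℝ)..x, (1 + t ^ p) ^ (-(2/p)))
      = arcsinpq (p / (p - 1)) p (x / (1 + x ^ p) ^ (1 / p)) := fun x hx => by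
    rw [integral_one_add_rpow_rpow_neg_two_div hp.le hx, arcsinpq, hconj]
  refine ⟨hsubst, fun u hu => ?_⟩
  obtain ⟨hs0, hs1⟩ := sinpq_mem_Ico hp' hp.le hu
  rw [sinpq_div_cospq_rpow hp' hp.le hu, hconj', hsubst _
    (div_nonneg hs0 (rpow_nonneg (one_sub_rpow_pos (by linarith) hs0 hs1).le _)),
    div_one_add_rpow_rpow_of_div_one_sub_rpow_rpow (by linarith) hs0 hs1]
  exact arcsinpq_sinpq hp' hp.le (Ico_subset_Icc_self hu)
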